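/- arXiv:1705.01363 — 2 statements merged into one kernel-verified Lean document; each statement's English description precedes it below -/
import Mathlib

section
/- For each fixed n, the modified unitary Ramanujan sum q ↦ c̃_q(n) is a multiplicative function of q. -/
def uDivisors (n : ℕ) : Finset ℕ := n.divisors.filter (fun d => Nat.gcd d (n / d) = 1)

def mustar (n : ℕ) : ℤ := (-1) ^ n.primeFactors.card

def gcud (n q : ℕ) : ℕ := (uDivisors n ∩ uDivisors q).sup id

def ctilde (q n : ℕ) : ℤ := ∑ d ∈ uDivisors (gcud n q), (d : ℤ) * mustar (q / d)

/-!
For coprime `a` and `b`, every unitary divisor `d` of `a * b` splits uniquely as the product of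
the unitary divisors `gcd d a` of `a` and `gcd d b` of `b`. Applied to the largest common unitary
divisor this gives `(n, a b)_** = (n, a)_** (n, b)_**`, and applied to the sum defining
`c̃_{ab}(n)` it turns that sum into a double sum which, `μ*` being multiplicative, factors as
`c̃_a(n) c̃_b(n)`.
-/

open Finset

lemma mem_uDivisors {d n : ℕ} : d ∈ uDivisors n ↔ d ∣ n ∧ Nat.Coprime d (n / d) ∧ n ≠ 0 := by
  simp only [uDivisors, mem_filter, Nat.mem_divisors, Nat.Coprime]
  tauto

lemma dvd_of_mem_uDivisors {d n : ℕ} (h : d ∈ uDivisors n) : d ∣ n :=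
  (mem_uDivisors.1 h).1

lemma ne_zero_of_mem_uDivisors {d n : ℕ} (h : d ∈ uDivisors n) : n ≠ 0 :=
  (mem_uDivisors.1 h).2.2

lemma pos_of_mem_uDivisors {d n : ℕ} (h : d ∈ uDivisors n) : 0 < d :=
  Nat.pos_of_dvd_of_pos (dvd_of_mem_uDivisors h) (Nat.pos_of_ne_zero (ne_zero_of_mem_uDivisors h))

lemma uDivisors_one : uDivisors 1 = {1} := by decide

lemma one_mem_uDivisors {n : ℕ} (hn : n ≠ 0) : 1 ∈ uDivisors n :=
  mem_uDivisors.2 ⟨one_dvd n, Nat.coprime_one_left _, hn⟩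

lemma self_mem_uDivisors {n : ℕ} (hn : n ≠ 0) : n ∈ uDivisors n :=
  mem_uDivisors.2 ⟨dvd_rfl, by simp [Nat.div_self (Nat.pos_of_ne_zero hn)], hn⟩

lemma left_mem_uDivisors_mul {d e : ℕ} (hde : Nat.Coprime d e) (h : d * e ≠ 0) :
    d ∈ uDivisors (d * e) := by
  refine mem_uDivisors.2 ⟨dvd_mul_right d e, ?_, h⟩
  rwa [Nat.mul_div_cancel_left e (Nat.pos_of_ne_zero (left_ne_zero_of_mul h))]

lemma mem_uDivisors_trans {e d n : ℕ} (he : e ∈ uDivisors d) (hd : d ∈ uDivisors n) :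
    e ∈ uDivisors n := by
  obtain ⟨hed, hecop, -⟩ := mem_uDivisors.1 he
  obtain ⟨hdn, hdcop, hn⟩ := mem_uDivisors.1 hd
  have hquot : n / e = d / e * (n / d) := by
    rw [Nat.div_mul_div_comm hed hdn, mul_comm e d,
      Nat.mul_div_mul_left n e (pos_of_mem_uDivisors hd)]
  refine mem_uDivisors.2 ⟨hed.trans hdn, ?_, hn⟩
  rw [hquot]
  exact hecop.mul_right (hdcop.coprime_dvd_left hed)

lemma mem_uDivisors_of_dvd_of_dvd {d m n : ℕ} (hd : d ∈ uDivisors n) (hdm : d ∣ m)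
    (hmn : m ∣ n) : d ∈ uDivisors m := by
  obtain ⟨-, hcop, hn⟩ := mem_uDivisors.1 hd
  exact mem_uDivisors.2
    ⟨hdm, hcop.coprime_dvd_right (Nat.div_dvd_div hdm hmn), ne_zero_of_dvd_ne_zero hn hmn⟩

lemma mul_mem_uDivisors_mul {d e a b : ℕ} (hab : Nat.Coprime a b) (hd : d ∈ uDivisors a)
    (he : e ∈ uDivisors b) : d * e ∈ uDivisors (a * b) := by
  obtain ⟨hda, hdcop, ha⟩ := mem_uDivisors.1 hd
  obtain ⟨heb, hecop, hb⟩ := mem_uDivisors.1 he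
  refine mem_uDivisors.2 ⟨mul_dvd_mul hda heb, ?_, mul_ne_zero ha hb⟩
  rw [← Nat.div_mul_div_comm hda heb]
  exact (hdcop.mul_right (hab.of_dvd hda (Nat.div_dvd_of_dvd heb))).mul_left
    ((hab.symm.of_dvd heb (Nat.div_dvd_of_dvd hda)).mul_right hecop)

lemma mul_mem_uDivisors {d e n : ℕ} (hde : Nat.Coprime d e) (hd : d ∈ uDivisors n)
    (he : e ∈ uDivisors n) : d * e ∈ uDivisors n := by
  obtain ⟨hdn, hdcop, -⟩ := mem_uDivisors.1 hd
  have hsplit : d * (n / d) = n := Nat.mul_div_cancel' hdn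
  have hen : e ∣ d * (n / d) := hsplit.symm ▸ dvd_of_mem_uDivisors he
  have he' : e ∈ uDivisors (n / d) :=
    mem_uDivisors_of_dvd_of_dvd he (hde.symm.dvd_of_dvd_mul_left hen) (Nat.div_dvd_of_dvd hdn)
  simpa only [hsplit] using
    mul_mem_uDivisors_mul hdcop (self_mem_uDivisors (pos_of_mem_uDivisors hd).ne') he'

lemma gcd_mem_uDivisors_self {d a b : ℕ} (hab : Nat.Coprime a b) (hd : d ∣ a * b) (hd0 : d ≠ 0) :
    d.gcd a ∈ uDivisors d := by
  have hsplit : d.gcd a * d.gcd b = d := (Nat.gcd_mul_gcd_eq_iff_dvd_mul_of_coprime hab).2 hd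
  have hcop : Nat.Coprime (d.gcd a) (d.gcd b) :=
    hab.of_dvd (Nat.gcd_dvd_right d a) (Nat.gcd_dvd_right d b)
  simpa only [hsplit] using left_mem_uDivisors_mul hcop (hsplit.symm ▸ hd0)

lemma gcd_mem_uDivisors_of_mem_uDivisors_mul {d a b : ℕ} (hab : Nat.Coprime a b)
    (hd : d ∈ uDivisors (a * b)) : d.gcd a ∈ uDivisors a :=
  mem_uDivisors_of_dvd_of_dvd
    (mem_uDivisors_trans
      (gcd_mem_uDivisors_self hab (dvd_of_mem_uDivisors hd) (pos_of_mem_uDivisors hd).ne') hd)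
    (Nat.gcd_dvd_right d a) (dvd_mul_right a b)

lemma sum_uDivisors_mul {M : Type*} [AddCommMonoid M] {a b : ℕ} (hab : Nat.Coprime a b)
    (f : ℕ → M) :
    ∑ d ∈ uDivisors (a * b), f d = ∑ p ∈ uDivisors a ×ˢ uDivisors b, f (p.1 * p.2) := by
  have hsplit {d : ℕ} (hd : d ∈ uDivisors (a * b)) : d.gcd a * d.gcd b = d :=
    (Nat.gcd_mul_gcd_eq_iff_dvd_mul_of_coprime hab).2 (dvd_of_mem_uDivisors hd)
  refine sum_nbij' (fun d ↦ (d.gcd a, d.gcd b)) (fun p ↦ p.1 * p.2) (fun d hd ↦ ?_)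
    (fun p hp ↦ ?_) (fun d hd ↦ hsplit hd) (fun p hp ↦ ?_) (fun d hd ↦ by rw [hsplit hd])
  · exact mem_product.2 ⟨gcd_mem_uDivisors_of_mem_uDivisors_mul hab hd,
      gcd_mem_uDivisors_of_mem_uDivisors_mul hab.symm (mul_comm a b ▸ hd)⟩
  · exact mul_mem_uDivisors_mul hab (mem_product.1 hp).1 (mem_product.1 hp).2
  · obtain ⟨x, y⟩ := p
    have hxa := dvd_of_mem_uDivisors (mem_product.1 hp).1
    have hyb := dvd_of_mem_uDivisors (mem_product.1 hp).2
    rw [Nat.Coprime.gcd_mul_right_cancel x (hab.symm.coprime_dvd_left hyb), mul_comm x y,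
      Nat.Coprime.gcd_mul_right_cancel y (hab.coprime_dvd_left hxa), Nat.gcd_eq_left hxa,
      Nat.gcd_eq_left hyb]

lemma mustar_mul {a b : ℕ} (hab : Nat.Coprime a b) : mustar (a * b) = mustar a * mustar b := by
  rw [mustar, hab.primeFactors_mul, card_union_of_disjoint hab.disjoint_primeFactors, pow_add]
  rfl

lemma gcud_mem {n q : ℕ} (hn : n ≠ 0) (hq : q ≠ 0) :
    gcud n q ∈ uDivisors n ∩ uDivisors q := by
  obtain ⟨d, hd, hsup⟩ := exists_mem_eq_sup _
    ⟨1, mem_inter.2 ⟨one_mem_uDivisors hn, one_mem_uDivisors hq⟩⟩ id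
  rwa [gcud, hsup]

lemma le_gcud {n q d : ℕ} (hd : d ∈ uDivisors n ∩ uDivisors q) : d ≤ gcud n q :=
  le_sup (f := id) hd

lemma gcud_one {n : ℕ} (hn : n ≠ 0) : gcud n 1 = 1 := by
  simpa [uDivisors_one] using (mem_inter.1 (gcud_mem hn one_ne_zero)).2

lemma gcd_le_gcud {n d a b : ℕ} (hab : Nat.Coprime a b) (hdn : d ∈ uDivisors n)
    (hd : d ∈ uDivisors (a * b)) : d.gcd a ≤ gcud n a :=
  le_gcud (mem_inter.2
    ⟨mem_uDivisors_trans
      (gcd_mem_uDivisors_self hab (dvd_of_mem_uDivisors hd) (pos_of_mem_uDivisors hd).ne') hdn,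
    gcd_mem_uDivisors_of_mem_uDivisors_mul hab hd⟩)

lemma gcud_mul {n a b : ℕ} (hn : n ≠ 0) (ha : a ≠ 0) (hb : b ≠ 0) (hab : Nat.Coprime a b) :
    gcud n (a * b) = gcud n a * gcud n b := by
  obtain ⟨hgn, hgab⟩ := mem_inter.1 (gcud_mem hn (mul_ne_zero ha hb))
  obtain ⟨han, haa⟩ := mem_inter.1 (gcud_mem hn ha)
  obtain ⟨hbn, hbb⟩ := mem_inter.1 (gcud_mem hn hb)
  apply le_antisymm
  · calc gcud n (a * b) = (gcud n (a * b)).gcd a * (gcud n (a * b)).gcd b :=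
          ((Nat.gcd_mul_gcd_eq_iff_dvd_mul_of_coprime hab).2 (dvd_of_mem_uDivisors hgab)).symm
      _ ≤ gcud n a * gcud n b := Nat.mul_le_mul (gcd_le_gcud hab hgn hgab)
          (gcd_le_gcud hab.symm hgn (mul_comm a b ▸ hgab))
  · have hcop : Nat.Coprime (gcud n a) (gcud n b) :=
      hab.of_dvd (dvd_of_mem_uDivisors haa) (dvd_of_mem_uDivisors hbb)
    exact le_gcud (mem_inter.2 ⟨mul_mem_uDivisors hcop han hbn, mul_mem_uDivisors_mul hab haa hbb⟩)

lemma mustar_mul_div_mul {a b x y : ℕ} (hab : Nat.Coprime a b) (hx : x ∣ a) (hy : y ∣ b) :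
    mustar (a * b / (x * y)) = mustar (a / x) * mustar (b / y) := by
  rw [← Nat.div_mul_div_comm hx hy,
    mustar_mul (hab.of_dvd (Nat.div_dvd_of_dvd hx) (Nat.div_dvd_of_dvd hy))]

theorem ctilde_multiplicative (n : ℕ) (hn : 0 < n) :
    ctilde 1 n = 1 ∧
      ∀ a b : ℕ, 0 < a → 0 < b → Nat.Coprime a b →
        ctilde (a * b) n = ctilde a n * ctilde b n := by
  refine ⟨by simp [ctilde, gcud_one hn.ne', uDivisors_one, mustar], fun a b ha hb hab ↦ ?_⟩
  have haa := (mem_inter.1 (gcud_mem hn.ne' ha.ne')).2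
  have hbb := (mem_inter.1 (gcud_mem hn.ne' hb.ne')).2
  have hcop : Nat.Coprime (gcud n a) (gcud n b) :=
    hab.of_dvd (dvd_of_mem_uDivisors haa) (dvd_of_mem_uDivisors hbb)
  rw [ctilde, gcud_mul hn.ne' ha.ne' hb.ne' hab, sum_uDivisors_mul hcop, ctilde, ctilde,
    sum_mul_sum, sum_product]
  refine sum_congr rfl fun x hx ↦ sum_congr rfl fun y hy ↦ ?_
  have hxa := (dvd_of_mem_uDivisors hx).trans (dvd_of_mem_uDivisors haa)
  have hyb := (dvd_of_mem_uDivisors hy).trans (dvd_of_mem_uDivisors hbb)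
  rw [mustar_mul_div_mul hab hxa hyb]
  push_cast
  ring
end

section
/- For real t > 1 and a positive integer Q, Σ_{m ≥ 1, gcd(m,Q)=1} μ*(m)/m^t = ζ(t) Π_p (1 − 2/p^t) Π_{p ∣ Q} (1 − 1/p^t)(1 − 2/p^t)^{-1}, where the first product is over all primes and the second over primes dividing Q. -/
/-!
Restricted to `n` coprime to `Q`, the summand `μ*(n) n^{-s}` is multiplicative, so for
`Re s > 1` its series is the Euler product of the local factors: `1` at `p ∣ Q`, and otherwise
`∑ₑ μ*(pᵉ) p^{-es} = 1 - p^{-s} / (1 - p^{-s}) = (1 - 2p^{-s}) / (1 - p^{-s})`.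
The product of these factors over all primes is `ζ(s) ∏ₚ (1 - 2p^{-s})` by the Euler product of
`ζ`, and the primes dividing `Q` are divided back out; `|p^{-s}| < 1/2` keeps every factor nonzero.
-/

open Complex

lemma mustar_one : mustar 1 = 1 := by simp [mustar]

lemma mustar_mul_s17 {m n : ℕ} (h : m.Coprime n) : mustar (m * n) = mustar m * mustar n := by
  rcases eq_or_ne m 0 with rfl | hm
  · simp [(Nat.coprime_zero_left n).mp h, mustar_one]
  rcases eq_or_ne n 0 with rfl | hn
  · simp [(Nat.coprime_zero_right m).mp h, mustar_one]
  rw [mustar, Nat.primeFactors_mul hm hn, Finset.card_union_of_disjoint h.disjoint_primeFactors,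
    pow_add, mustar, mustar]

lemma mustar_prime_pow {p e : ℕ} (hp : p.Prime) (he : e ≠ 0) : mustar (p ^ e) = -1 := by
  simp [mustar, Nat.primeFactors_pow _ he, hp.primeFactors]

lemma norm_mustar (n : ℕ) : ‖(mustar n : ℂ)‖ = 1 := by
  simp [mustar]

lemma hasSum_mustar_prime_pow_mul {p : ℕ} (hp : p.Prime) {x : ℂ} (hx : ‖x‖ < 1) :
    HasSum (fun e ↦ (mustar (p ^ e) : ℂ) * x ^ e) ((1 - 2 * x) / (1 - x)) := by
  have h1x : 1 - x ≠ 0 := sub_ne_zero.mpr fun h ↦ by simp [← h] at hx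
  have htail : (fun e ↦ (mustar (p ^ (e + 1)) : ℂ) * x ^ (e + 1)) = fun e ↦ -x * x ^ e := by
    funext e
    rw [mustar_prime_pow hp e.succ_ne_zero, pow_succ]
    push_cast
    ring
  have hvalue : (1 - 2 * x) / (1 - x) - ∑ e ∈ Finset.range 1, (mustar (p ^ e) : ℂ) * x ^ e =
      -x * (1 - x)⁻¹ := by
    simp only [Finset.sum_range_one, pow_zero, mustar_one, Int.cast_one, mul_one]
    field_simp
    ring
  rw [← hasSum_nat_add_iff' 1, htail, hvalue]
  exact (hasSum_geometric_of_norm_lt_one hx).mul_left (-x)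

lemma norm_one_div_prime_cpow_lt_half {p : ℕ} (hp : p.Prime) {s : ℂ} (hs : 1 < s.re) :
    ‖1 / (p : ℂ) ^ s‖ < 1 / 2 := by
  rw [norm_div, norm_one, norm_natCast_cpow_of_pos hp.pos]
  refine one_div_lt_one_div_of_lt two_pos ?_
  calc (2 : ℝ) = 2 ^ (1 : ℝ) := (Real.rpow_one 2).symm
    _ < 2 ^ s.re := Real.rpow_lt_rpow_of_exponent_lt one_lt_two hs
    _ ≤ p ^ s.re := Real.rpow_le_rpow zero_le_two (by exact_mod_cast hp.two_le) (by linarith)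

lemma natCast_pow_cpow (p e : ℕ) (s : ℂ) : ((p ^ e : ℕ) : ℂ) ^ s = ((p : ℂ) ^ s) ^ e := by
  rw [← cpow_nat_mul, natCast_cpow_natCast_mul, Nat.cast_pow]

lemma HasProd.mul_prod_of_ite {α β : Type*} [CommMonoid α] [TopologicalSpace α] [ContinuousMul α]
    {f : β → α} {a : α} {P : β → Prop} [DecidablePred P] {s : Finset β} (hs : ∀ b, b ∈ s ↔ P b)
    (h : HasProd (fun b ↦ if P b then 1 else f b) a) : HasProd f (a * ∏ b ∈ s, f b) := by
  have hfin : HasProd (fun b ↦ if P b then f b else 1) (∏ b ∈ s, f b) := by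
    rw [← Finset.prod_congr rfl fun b hb ↦ if_pos ((hs b).mp hb)]
    exact hasProd_prod_of_ne_finset_one fun b hb ↦ if_neg (mt (hs b).mpr hb)
  convert h.mul hfin using 2 with b
  split_ifs <;> simp

noncomputable def mustarEulerFactor (s : ℂ) (p : ℕ) : ℂ :=
  (1 - 2 / (p : ℂ) ^ s) / (1 - 1 / (p : ℂ) ^ s)

lemma mustarEulerFactor_ne_zero {p : ℕ} (hp : p.Prime) {s : ℂ} (hs : 1 < s.re) :
    mustarEulerFactor s p ≠ 0 := by
  have hx := norm_one_div_prime_cpow_lt_half hp hs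
  have h2x : ‖2 / (p : ℂ) ^ s‖ < 1 := by
    rw [← mul_one_div, norm_mul, Complex.norm_ofNat]
    linarith
  exact div_ne_zero (sub_ne_zero.mpr fun h ↦ by simp [← h] at h2x)
    (sub_ne_zero.mpr fun h ↦ by rw [← h] at hx; norm_num at hx)

noncomputable def mustarCoprimeSummand (Q : ℕ) (s : ℂ) : ℕ → ℂ :=
  {n | 0 < n ∧ n.Coprime Q}.indicator fun n ↦ (mustar n : ℂ) / (n : ℂ) ^ s

section mustarCoprimeSummand

variable {Q : ℕ} {s : ℂ}

lemma mustarCoprimeSummand_zero : mustarCoprimeSummand Q s 0 = 0 := by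
  simp [mustarCoprimeSummand]

lemma mustarCoprimeSummand_one : mustarCoprimeSummand Q s 1 = 1 := by
  simp [mustarCoprimeSummand, mustar_one]

lemma mustarCoprimeSummand_mul {m n : ℕ} (h : m.Coprime n) :
    mustarCoprimeSummand Q s (m * n) = mustarCoprimeSummand Q s m * mustarCoprimeSummand Q s n := by
  simp only [mustarCoprimeSummand, Set.indicator_apply, Set.mem_ofPred_eq,
    CanonicallyOrderedAdd.mul_pos, Nat.coprime_mul_iff_left]
  split_ifs with hmn hm hn hn
  · rw [mustar_mul_s17 h, Nat.cast_mul, natCast_mul_natCast_cpow, Int.cast_mul, mul_div_mul_comm]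
  all_goals first | tauto | simp only [mul_zero, zero_mul]

lemma tsum_coprime_eq_tsum_mustarCoprimeSummand :
    ∑' m : {m : ℕ // 0 < m ∧ m.Coprime Q}, (mustar m : ℂ) / (m : ℂ) ^ s =
      ∑' n, mustarCoprimeSummand Q s n :=
  tsum_subtype {m | 0 < m ∧ m.Coprime Q} fun m ↦ (mustar m : ℂ) / (m : ℂ) ^ s

lemma summable_norm_mustarCoprimeSummand (hs : 1 < s.re) :
    Summable (‖mustarCoprimeSummand Q s ·‖) := by
  refine (summable_norm_iff.mpr (summable_one_div_nat_cpow.mpr hs)).of_nonneg_of_le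
    (fun n ↦ norm_nonneg _) fun n ↦ (norm_indicator_le_norm_self _ n).trans_eq ?_
  rw [norm_div, norm_div, norm_mustar, norm_one]

lemma tsum_mustarCoprimeSummand_prime_pow {p : ℕ} (hp : p.Prime) (hs : 1 < s.re) :
    ∑' e, mustarCoprimeSummand Q s (p ^ e) = if p ∣ Q then 1 else mustarEulerFactor s p := by
  split_ifs with hpQ
  · refine (tsum_eq_single 0 fun e he ↦ Set.indicator_of_notMem ?_ _).trans ?_
    · exact fun hmem ↦ hp.coprime_iff_not_dvd.mp (hmem.2.coprime_dvd_left (dvd_pow_self p he)) hpQ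
    · rw [pow_zero]
      exact mustarCoprimeSummand_one
  · have hcop : p.Coprime Q := hp.coprime_iff_not_dvd.mpr hpQ
    have hx : ‖1 / (p : ℂ) ^ s‖ < 1 := (norm_one_div_prime_cpow_lt_half hp hs).trans (by norm_num)
    convert (hasSum_mustar_prime_pow_mul hp hx).tsum_eq using 1
    · refine tsum_congr fun e ↦ ?_
      rw [mustarCoprimeSummand, Set.indicator_of_mem (show p ^ e ∈ {n | 0 < n ∧ n.Coprime Q} from
          ⟨pow_pos hp.pos e, hcop.pow_left e⟩),
        natCast_pow_cpow, one_div_pow, mul_one_div]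
    · rw [mustarEulerFactor, mul_one_div]

end mustarCoprimeSummand

lemma hasProd_ite_dvd_mustarEulerFactor {s : ℂ} (hs : 1 < s.re) (Q : ℕ) :
    HasProd (fun p : Nat.Primes ↦ if (p : ℕ) ∣ Q then 1 else mustarEulerFactor s p)
      (∑' n, mustarCoprimeSummand Q s n) := by
  convert EulerProduct.eulerProduct_hasProd mustarCoprimeSummand_one mustarCoprimeSummand_mul
    (summable_norm_mustarCoprimeSummand hs) mustarCoprimeSummand_zero using 2 with p
  exact (tsum_mustarCoprimeSummand_prime_pow p.prop hs).symm

lemma hasProd_mustarEulerFactor {s : ℂ} (hs : 1 < s.re) {Q : ℕ} (hQ : Q ≠ 0) :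
    HasProd (fun p : Nat.Primes ↦ mustarEulerFactor s p)
      ((∑' n, mustarCoprimeSummand Q s n) * ∏ p ∈ Q.primeFactors, mustarEulerFactor s p) := by
  have hmem (p : Nat.Primes) : p ∈ Q.primeFactors.subtype Nat.Prime ↔ (p : ℕ) ∣ Q :=
    Finset.mem_subtype.trans <| (Nat.mem_primeFactors_of_ne_zero hQ).trans (and_iff_right p.prop)
  have hprod : ∏ p ∈ Q.primeFactors.subtype Nat.Prime, mustarEulerFactor s p =
      ∏ p ∈ Q.primeFactors, mustarEulerFactor s p := by
    rw [Finset.prod_subtype_eq_prod_filter,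
      Finset.filter_true_of_mem fun p hp ↦ Nat.prime_of_mem_primeFactors hp]
  rw [← hprod]
  exact (hasProd_ite_dvd_mustarEulerFactor hs Q).mul_prod_of_ite hmem

lemma hasProd_mustarEulerFactor_riemannZeta {s : ℂ} (hs : 1 < s.re) :
    HasProd (fun p : Nat.Primes ↦ mustarEulerFactor s p)
      (riemannZeta s * ∏' p : Nat.Primes, (1 - 2 / (p : ℂ) ^ s)) := by
  have hsum : Summable fun n : ℕ ↦ -2 / (n : ℂ) ^ s := by
    simpa only [mul_one_div] using (summable_one_div_nat_cpow.mpr hs).mul_left (-2)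
  have hsumP : Summable fun p : Nat.Primes ↦ -2 / (p : ℂ) ^ s :=
    hsum.comp_injective Nat.Primes.coe_nat_injective
  have hmul : Multipliable fun p : Nat.Primes ↦ 1 - 2 / (p : ℂ) ^ s := by
    simpa only [sub_eq_add_neg, neg_div] using Complex.multipliable_one_add_of_summable hsumP
  convert (riemannZeta_eulerProduct_hasProd hs).mul hmul.hasProd using 2 with p
  rw [mustarEulerFactor, cpow_neg, one_div, div_eq_inv_mul]

lemma tsum_mustarCoprimeSummand {s : ℂ} (hs : 1 < s.re) {Q : ℕ} (hQ : Q ≠ 0) :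
    ∑' n, mustarCoprimeSummand Q s n = riemannZeta s * (∏' p : Nat.Primes, (1 - 2 / (p : ℂ) ^ s)) *
      ∏ p ∈ Q.primeFactors, (mustarEulerFactor s p)⁻¹ := by
  have hprod : ∏ p ∈ Q.primeFactors, mustarEulerFactor s p ≠ 0 :=
    Finset.prod_ne_zero_iff.mpr fun p hp ↦
      mustarEulerFactor_ne_zero (Nat.prime_of_mem_primeFactors hp) hs
  rw [Finset.prod_inv_distrib, ← div_eq_mul_inv, eq_div_iff hprod]
  exact (hasProd_mustarEulerFactor hs hQ).unique (hasProd_mustarEulerFactor_riemannZeta hs)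

theorem mustar_coprime_series (t : ℝ) (ht : 1 < t) (Q : ℕ) (hQ : 0 < Q) :
    ∑' m : {m : ℕ // 0 < m ∧ Nat.Coprime m Q}, (mustar (m : ℕ) : ℂ) / ((m : ℕ) : ℂ) ^ (t : ℂ) =
      riemannZeta (t : ℂ) * (∏' p : Nat.Primes, (1 - 2 / ((p : ℕ) : ℂ) ^ (t : ℂ))) *
        ∏ p ∈ Q.primeFactors, (1 - 1 / (p : ℂ) ^ (t : ℂ)) * (1 - 2 / (p : ℂ) ^ (t : ℂ))⁻¹ := by
  have hs : 1 < (t : ℂ).re := by simpa using ht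
  rw [tsum_coprime_eq_tsum_mustarCoprimeSummand, tsum_mustarCoprimeSummand hs hQ.ne']
  congr 1
  exact Finset.prod_congr rfl fun p _ ↦ by rw [mustarEulerFactor, inv_div, div_eq_mul_inv]
end
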